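/- The graded subalgebra R = ⊕_{m≥0} I_m · W^m of ℂ[x,y,W], where I_0 = ℂ[x,y] and for m ≥ 1, I_m is the ideal (xy, x^m, y^m) ⊆ ℂ[x,y], is not finitely generated as a ℂ-algebra. -/
import Mathlib


open MvPolynomial Polynomial

/-- `I 0 = ℂ[x,y]` and, for `m ≥ 1`, `I m = (xy, x^m, y^m) ⊆ ℂ[x,y]`. -/
noncomputable def Igr : ℕ → Ideal (MvPolynomial (Fin 2) ℂ) := fun m =>
  if m = 0 then ⊤ else Ideal.span {X 0 * X 1, X 0 ^ m, X 1 ^ m}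

/-- The ideal of polynomials all of whose monomials have degree ≥ 3. -/
noncomputable def Kdeg : Ideal (MvPolynomial (Fin 2) ℂ) where
  carrier := {p | ∀ d : Fin 2 →₀ ℕ, p.coeff d ≠ 0 → 3 ≤ d 0 + d 1}
  zero_mem' := by intro d hd; simp at hd
  add_mem' := by
    intro a b ha hb d hd
    by_cases h : a.coeff d = 0
    · exact hb d (by rwa [MvPolynomial.coeff_add, h, zero_add] at hd)
    · exact ha d h
  smul_mem' := by
    intro c x hx d hd
    rw [smul_eq_mul, MvPolynomial.coeff_mul] at hd
    obtain ⟨⟨u, v⟩, huv, hne⟩ := Finset.exists_ne_zero_of_sum_ne_zero hd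
    have hv : x.coeff v ≠ 0 := fun h => hne (by simp [h])
    have h3 := hx v hv
    have huv' : u + v = d := Finset.HasAntidiagonal.mem_antidiagonal.mp huv
    have h0 : u 0 + v 0 = d 0 := by rw [← huv']; simp
    have h1 : u 1 + v 1 = d 1 := by rw [← huv']; simp
    omega

lemma mem_Kdeg {p : MvPolynomial (Fin 2) ℂ} :
    p ∈ Kdeg ↔ ∀ d : Fin 2 →₀ ℕ, p.coeff d ≠ 0 → 3 ≤ d 0 + d 1 := Iff.rfl

lemma mono_mem_Kdeg (i j : ℕ) (h : 3 ≤ i + j) :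
    (X 0 ^ i * X 1 ^ j : MvPolynomial (Fin 2) ℂ) ∈ Kdeg := by
  rw [mem_Kdeg]
  intro d hd
  rw [MvPolynomial.X_pow_eq_monomial, MvPolynomial.X_pow_eq_monomial, monomial_mul, MvPolynomial.coeff_monomial] at hd
  split at hd
  · next heq =>
    subst heq
    simpa [Finsupp.single_apply] using h
  · exact absurd rfl hd

lemma Igr_mul_le (a b : ℕ) (ha : 1 ≤ a) (hb : 1 ≤ b) (hab : 3 ≤ a + b) :
    Igr a * Igr b ≤ Kdeg := by
  unfold Igr
  rw [if_neg (by omega), if_neg (by omega), Ideal.span_mul_span', Ideal.span_le]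
  rintro z hz
  rw [Set.mem_mul] at hz
  obtain ⟨u, hu, v, hv, rfl⟩ := hz
  simp only [Set.mem_insert_iff, Set.mem_singleton_iff] at hu hv
  rcases hu with rfl | rfl | rfl <;> rcases hv with rfl | rfl | rfl
  · exact (show (X 0 * X 1 * (X 0 * X 1) : MvPolynomial (Fin 2) ℂ) = X 0 ^ 2 * X 1 ^ 2 by ring) ▸ mono_mem_Kdeg 2 2 (by omega)
  · exact (show (X 0 * X 1 * X 0 ^ b : MvPolynomial (Fin 2) ℂ) = X 0 ^ (b + 1) * X 1 ^ 1 by ring) ▸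
      mono_mem_Kdeg (b + 1) 1 (by omega)
  · exact (show (X 0 * X 1 * X 1 ^ b : MvPolynomial (Fin 2) ℂ) = X 0 ^ 1 * X 1 ^ (b + 1) by ring) ▸
      mono_mem_Kdeg 1 (b + 1) (by omega)
  · exact (show (X 0 ^ a * (X 0 * X 1) : MvPolynomial (Fin 2) ℂ) = X 0 ^ (a + 1) * X 1 ^ 1 by ring) ▸
      mono_mem_Kdeg (a + 1) 1 (by omega)
  · exact (show (X 0 ^ a * X 0 ^ b : MvPolynomial (Fin 2) ℂ) = X 0 ^ (a + b) * X 1 ^ 0 by ring) ▸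
      mono_mem_Kdeg (a + b) 0 (by omega)
  · exact mono_mem_Kdeg a b (by omega)
  · exact (show (X 1 ^ a * (X 0 * X 1) : MvPolynomial (Fin 2) ℂ) = X 0 ^ 1 * X 1 ^ (a + 1) by ring) ▸
      mono_mem_Kdeg 1 (a + 1) (by omega)
  · exact (show (X 1 ^ a * X 0 ^ b : MvPolynomial (Fin 2) ℂ) = X 0 ^ b * X 1 ^ a by ring) ▸ mono_mem_Kdeg b a (by omega)
  · exact (show (X 1 ^ a * X 1 ^ b : MvPolynomial (Fin 2) ℂ) = X 0 ^ 0 * X 1 ^ (a + b) by ring) ▸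
      mono_mem_Kdeg 0 (a + b) (by omega)

theorem rees_like_algebra_not_fg'
    (R : Subalgebra ℂ (Polynomial (MvPolynomial (Fin 2) ℂ)))
    (hR : (R : Set (Polynomial (MvPolynomial (Fin 2) ℂ))) =
      {f | ∀ m : ℕ, f.coeff m ∈ Igr m}) :
    ¬ R.FG := by
  have hmemR : ∀ f, f ∈ R ↔ ∀ m : ℕ, f.coeff m ∈ Igr m := by
    intro f
    rw [← SetLike.mem_coe, hR]
    rfl
  rintro ⟨S, hS⟩
  set N : ℕ := max 2 (S.sup fun p => p.natDegree) with hN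
  have hN2 : 2 ≤ N := le_max_left _ _
  have hNdeg : ∀ s ∈ S, s.natDegree ≤ N :=
    fun s hs => le_trans (Finset.le_sup hs) (le_max_right _ _)
  -- main claim
  have claim : ∀ p ∈ Algebra.adjoin ℂ (↑S : Set (Polynomial (MvPolynomial (Fin 2) ℂ))), ∀ k, N < k → p.coeff k ∈ Kdeg := by
    intro p hp
    induction hp using Algebra.adjoin_induction with
    | mem s hs =>
      intro k hk
      rw [Polynomial.coeff_eq_zero_of_natDegree_lt (lt_of_le_of_lt (hNdeg s hs) hk)]
      exact Kdeg.zero_mem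
    | algebraMap r =>
      intro k hk
      rw [show (algebraMap ℂ (Polynomial (MvPolynomial (Fin 2) ℂ))) r =
          Polynomial.C (algebraMap ℂ (MvPolynomial (Fin 2) ℂ) r) from rfl,
        Polynomial.coeff_C, if_neg (by omega)]
      exact Kdeg.zero_mem
    | add x y hx hy ihx ihy =>
      intro k hk
      rw [Polynomial.coeff_add]
      exact Kdeg.add_mem (ihx k hk) (ihy k hk)
    | mul x y hx hy ihx ihy =>
      intro k hk
      have hxR : x ∈ R := hS ▸ hx
      have hyR : y ∈ R := hS ▸ hy
      rw [Polynomial.coeff_mul]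
      refine Ideal.sum_mem _ ?_
      rintro ⟨a, b⟩ hab
      have hab' : a + b = k := Finset.HasAntidiagonal.mem_antidiagonal.mp hab
      rcases Nat.eq_zero_or_pos a with rfl | ha
      · exact Ideal.mul_mem_left _ _ (ihy b (by omega))
      rcases Nat.eq_zero_or_pos b with rfl | hb
      · exact Ideal.mul_mem_right _ _ (ihx a (by omega))
      exact Igr_mul_le a b ha hb (by omega)
        (Ideal.mul_mem_mul ((hmemR x).mp hxR a) ((hmemR y).mp hyR b))
  -- the element xy W^(N+1)
  set f : Polynomial (MvPolynomial (Fin 2) ℂ) :=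
    Polynomial.monomial (N + 1) (X 0 * X 1) with hf
  have hfR : f ∈ R := by
    rw [hmemR]
    intro m
    rw [hf, Polynomial.coeff_monomial]
    split
    · next h =>
      unfold Igr
      rw [if_neg (by omega)]
      exact Ideal.subset_span (by simp)
    · exact Ideal.zero_mem _
  have hfadj : f ∈ Algebra.adjoin ℂ (↑S : Set (Polynomial (MvPolynomial (Fin 2) ℂ))) := hS ▸ hfR
  have hxyK : (X 0 * X 1 : MvPolynomial (Fin 2) ℂ) ∈ Kdeg := by
    have := claim f hfadj (N + 1) (by omega)
    rwa [hf, Polynomial.coeff_monomial, if_pos rfl] at this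
  have := hxyK ((Finsupp.single 0 1) + (Finsupp.single 1 1)) (by
    rw [show (X 0 * X 1 : MvPolynomial (Fin 2) ℂ) = X 0 ^ 1 * X 1 ^ 1 by ring,
      MvPolynomial.X_pow_eq_monomial, MvPolynomial.X_pow_eq_monomial, monomial_mul,
      MvPolynomial.coeff_monomial, if_pos rfl]
    simp)
  simp [Finsupp.single_apply] at this

/-- The graded subalgebra `R = ⊕_{m ≥ 0} I_m · W^m` of `ℂ[x,y][W] = ℂ[x,y,W]`,
where `I_0 = ℂ[x,y]` and `I_m = (xy, x^m, y^m)` for `m ≥ 1`, is not finitely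
generated as a `ℂ`-algebra.  (An element of `ℂ[x,y][W]` lies in `R` iff its
coefficient of `W^m` lies in `I_m` for every `m`.) -/
theorem rees_like_algebra_not_fg
    (R : Subalgebra ℂ (Polynomial (MvPolynomial (Fin 2) ℂ)))
    (hR : (R : Set (Polynomial (MvPolynomial (Fin 2) ℂ))) =
      {f | ∀ m : ℕ, f.coeff m ∈ Igr m}) :
    ¬ R.FG := by
  exact rees_like_algebra_not_fg' R hR
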